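/- Let k ∈ {0, 1, ..., 2^n − 2} have binary representation b_{n−1}b_{n−2}...b_1b_0 and let i ∈ {0, ..., n−1} be the least index with b_i = 0. Then: (a) I(k, j) = 0 for every j ∈ {0, ..., i−1}; (b) I(k, i) = m^{k+1}·(m^{2^i} − 1) and I(k, a) + I(k, i) = m^{k+1+2^i}; (c) I(k+1, i) = 0 and I(k+1, j) = I(k, j) for every j ∈ {i+1, ..., n−1}; (d) I(k+1, a) + I(k+1, 0) + ⋯ + I(k+1, i−1) = m^{k+1+2^i}. -/
import Mathlib


/-- `I(k, i)` for `i ∈ {0, …, n-1}`: with `b_i` the `i`-th binary digit of `k`,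
`I(k, i) = (1 - b_i) · m ^ e · (m ^ (2^i) - 1)` where
`e = (the integer with binary representation b_{n-1}…b_{i+1} followed by i+1 zeros) + 2^i`,
i.e. `e = (k / 2^(i+1)) · 2^(i+1) + 2^i`.  (`I(k, a) = m^(k+1)` is written out
explicitly below.) -/
def Inum (m k i : ℕ) : ℕ :=
  (1 - (if Nat.testBit k i then 1 else 0)) *
    m ^ (k / 2 ^ (i + 1) * 2 ^ (i + 1) + 2 ^ i) * (m ^ 2 ^ i - 1)

/-- Lemma 3 of the paper: for `k ∈ {0, …, 2^n - 2}` and `i ∈ {0, …, n-1}` the least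
index with `b_i = 0`:
(a) `I(k, j) = 0` for `j < i`;
(b) `I(k, i) = m^(k+1)·(m^(2^i) - 1)` and `I(k, a) + I(k, i) = m^(k+1+2^i)`;
(c) `I(k+1, i) = 0` and `I(k+1, j) = I(k, j)` for `j ∈ {i+1, …, n-1}`;
(d) `I(k+1, a) + I(k+1, 0) + ⋯ + I(k+1, i-1) = m^(k+1+2^i)`. -/
lemma modlem (k i : ℕ) (h : ∀ j < i, Nat.testBit k j = true) : k % 2 ^ i = 2 ^ i - 1 := by
  induction i with
  | zero => omega
  | succ i ih =>
    have h1 : k / 2 ^ i % 2 = 1 := by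
      have h' := h i (Nat.lt_succ_self i)
      rw [Nat.testBit_eq_decide_div_mod_eq] at h'
      simpa using h'
    have h2 : k % 2 ^ i = 2 ^ i - 1 := ih (fun j hj => h j (hj.trans (Nat.lt_succ_self i)))
    have h3 : (0:ℕ) < 2 ^ i := Nat.two_pow_pos i
    rw [pow_succ, Nat.mod_mul, h2, h1]
    omega

lemma succ_div_mod (a d : ℕ) (h : a % d + 1 < d) :
    (a + 1) % d = a % d + 1 ∧ (a + 1) / d = a / d := by
  have hd : 0 < d := by omega
  have h1 : a + 1 = (a % d + 1) + d * (a / d) := by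
    have := Nat.div_add_mod a d; omega
  constructor
  · rw [h1, Nat.add_mul_mod_self_left, Nat.mod_eq_of_lt h]
  · rw [h1, Nat.add_mul_div_left _ _ hd, Nat.div_eq_of_lt h, Nat.zero_add]

lemma addmul (a b : ℕ) (hb : 1 ≤ b) : a + a * (b - 1) = a * b := by
  have h : b - 1 + 1 = b := by omega
  calc a + a * (b - 1) = a * (b - 1 + 1) := by ring
    _ = a * b := by rw [h]

theorem stmt5 (n m : ℕ) (hm : 2 ≤ m) (k : ℕ) (hk : k + 2 ≤ 2 ^ n)
    (i : ℕ) (hin : i < n) (hbit : Nat.testBit k i = false)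
    (hleast : ∀ j < i, Nat.testBit k j = true) :
    (∀ j < i, Inum m k j = 0) ∧
    (Inum m k i = m ^ (k + 1) * (m ^ 2 ^ i - 1) ∧
      m ^ (k + 1) + Inum m k i = m ^ (k + 1 + 2 ^ i)) ∧
    (Inum m (k + 1) i = 0 ∧ ∀ j, i < j → j < n → Inum m (k + 1) j = Inum m k j) ∧
    (m ^ (k + 2) + ∑ j ∈ Finset.range i, Inum m (k + 1) j = m ^ (k + 1 + 2 ^ i)) := by
  have hpi : (0:ℕ) < 2 ^ i := Nat.two_pow_pos i
  have hmodi : k % 2 ^ i = 2 ^ i - 1 := modlem k i hleast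
  have hbit' : k / 2 ^ i % 2 = 0 := by
    rw [Nat.testBit_eq_decide_div_mod_eq] at hbit
    simp only [decide_eq_false_iff_not] at hbit
    omega
  have hmodi1 : k % 2 ^ (i + 1) = 2 ^ i - 1 := by
    rw [pow_succ, Nat.mod_mul, hmodi, hbit']; simp
  have hklb : 2 ^ i - 1 ≤ k := hmodi ▸ Nat.mod_le k _
  have he : k / 2 ^ (i + 1) * 2 ^ (i + 1) + 2 ^ i = k + 1 := by
    have h1 := Nat.div_add_mod' k (2 ^ (i + 1)); omega
  -- (a)
  have ha : ∀ j < i, Inum m k j = 0 := fun j hj => by simp [Inum, hleast j hj]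
  -- (b)
  have hm1 : (1:ℕ) ≤ m ^ 2 ^ i := Nat.one_le_pow _ _ (by omega)
  have hb1 : Inum m k i = m ^ (k + 1) * (m ^ 2 ^ i - 1) := by
    simp only [Inum, hbit, he]; norm_num
  have hb2 : m ^ (k + 1) + Inum m k i = m ^ (k + 1 + 2 ^ i) := by
    rw [hb1, addmul _ _ hm1, ← pow_add]
  -- (c1)
  have hsm := succ_div_mod k (2 ^ (i + 1)) (by rw [hmodi1, pow_succ]; omega)
  have hmod1 : (k + 1) % 2 ^ (i + 1) = 2 ^ i := by rw [hsm.1, hmodi1]; omega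
  have hq := Nat.div_add_mod' (k + 1) (2 ^ (i + 1))
  have hkp : k + 1 = 2 ^ i * (2 * ((k + 1) / 2 ^ (i + 1)) + 1) := by
    rw [hmod1] at hq
    set q := (k + 1) / 2 ^ (i + 1) with hqdef
    rw [← hq, pow_succ]; ring
  have hd2 : (k + 1) / 2 ^ i = 2 * ((k + 1) / 2 ^ (i + 1)) + 1 := by
    conv_lhs => rw [hkp]
    exact Nat.mul_div_cancel_left _ hpi
  have hc1 : Nat.testBit (k + 1) i = true := by
    rw [Nat.testBit_eq_decide_div_mod_eq, hd2]
    simp only [decide_eq_true_eq]; omega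
  have hc1' : Inum m (k + 1) i = 0 := by simp [Inum, hc1]
  -- (c2)
  have key : ∀ j, i < j → k % 2 ^ j + 1 < 2 ^ j := by
    intro j hij
    have h1 : k % 2 ^ j < 2 ^ j := Nat.mod_lt _ (Nat.two_pow_pos j)
    by_contra hcon
    have heq : k % 2 ^ j = 2 ^ j - 1 := by omega
    have h2 : (k % 2 ^ j).testBit i = (2 ^ j - 1).testBit i := by rw [heq]
    rw [Nat.testBit_mod_two_pow, Nat.testBit_two_pow_sub_one, hbit] at h2
    simp [hij] at h2
  have hc2 : ∀ j, i < j → j < n → Inum m (k + 1) j = Inum m k j := by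
    intro j hij _
    have d1 := (succ_div_mod k (2 ^ j) (key j hij)).2
    have d2 := (succ_div_mod k (2 ^ (j + 1)) (key (j + 1) (by omega))).2
    have tb : Nat.testBit (k + 1) j = Nat.testBit k j := by
      rw [Nat.testBit_eq_decide_div_mod_eq, Nat.testBit_eq_decide_div_mod_eq, d1]
    simp only [Inum, tb, d2]
  -- (d)
  have hdvd : ∀ t, t < i → 2 ^ (t + 1) ∣ k + 1 := by
    intro t ht
    have hkk : k + 1 = (k / 2 ^ i + 1) * 2 ^ i := by
      have h := Nat.div_add_mod' k (2 ^ i); rw [hmodi] at h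
      rw [add_mul, one_mul]; omega
    have hdi : (2 : ℕ) ^ (t + 1) ∣ 2 ^ i := pow_dvd_pow 2 (Nat.succ_le_of_lt ht)
    exact dvd_trans hdi ⟨k / 2 ^ i + 1, by rw [hkk]; ring⟩
  have hterm : ∀ t, t < i → Inum m (k + 1) t = m ^ (k + 1 + 2 ^ t) * (m ^ 2 ^ t - 1) := by
    intro t ht
    obtain ⟨c, hc⟩ := hdvd t ht
    have htb : Nat.testBit (k + 1) t = false := by
      rw [Nat.testBit_eq_decide_div_mod_eq]
      have hc2' : k + 1 = 2 ^ t * (2 * c) := by rw [hc, pow_succ]; ring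
      have hdd : (k + 1) / 2 ^ t = 2 * c := by
        rw [hc2', Nat.mul_div_cancel_left _ (Nat.two_pow_pos t)]
      simp [hdd, Nat.mul_mod_right]
    have hdv : (k + 1) / 2 ^ (t + 1) * 2 ^ (t + 1) = k + 1 :=
      Nat.div_mul_cancel (hdvd t ht)
    simp only [Inum, htb, hdv]; norm_num
  have hd : ∀ t, t ≤ i →
      m ^ (k + 2) + ∑ j ∈ Finset.range t, Inum m (k + 1) j = m ^ (k + 1 + 2 ^ t) := by
    intro t
    induction t with
    | zero => intro _; norm_num
    | succ t ih =>
      intro hti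
      have h1 : (1:ℕ) ≤ m ^ 2 ^ t := Nat.one_le_pow _ _ (by omega)
      rw [Finset.sum_range_succ, ← add_assoc, ih (by omega), hterm t (by omega),
        addmul _ _ h1, ← pow_add]
      congr 1
      rw [pow_succ]; omega
  exact ⟨ha, ⟨hb1, hb2⟩, ⟨hc1', hc2⟩, hd i le_rfl⟩
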